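/- arXiv:1801.00941 — 2 statements merged into one kernel-verified Lean document; each statement's English description precedes it below -/
import Mathlib

section
/- Let K ∈ ℝ and let G : ℝⁿ → ℝ be smooth with ⟨(∇²G)(x) v, v⟩ ≥ K|v|² for all x ∈ ℝⁿ and v ∈ ℝⁿ. Then for every smooth f : ℝⁿ → ℝ and every x ∈ ℝⁿ, 4|∇f|²·(‖∇²f‖² + ⟨(∇²G)∇f, ∇f⟩ − K|∇f|²) ≥ |∇(|∇f|²)|². (This is the inequality 4Γ(f)(Γ₂(f) − KΓ(f)) ≥ Γ(Γ(f)) under the curvature-dimension condition CD(K,∞), in the weighted Euclidean case where Γ(f) = |∇f|² and Γ₂(f) = ‖∇²f‖² + ⟨(∇²G)∇f, ∇f⟩.) -/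
noncomputable section
open scoped BigOperators

/-- `i`-th partial derivative of a function on `ℝⁿ`. -/
def pd {n : ℕ} (i : Fin n) (f : EuclideanSpace ℝ (Fin n) → ℝ)
    (x : EuclideanSpace ℝ (Fin n)) : ℝ :=
  fderiv ℝ f x (EuclideanSpace.single i 1)

/-- Under the curvature-dimension condition `∇²G ≥ K·Id` (i.e. `CD(K,∞)` for the
weighted Euclidean Markov triple), every smooth `f` satisfies
`4|∇f|²·(‖∇²f‖² + ⟨(∇²G)∇f,∇f⟩ − K|∇f|²) ≥ |∇(|∇f|²)|²`. -/
theorem stmt7 {n : ℕ} (K : ℝ) (G : EuclideanSpace ℝ (Fin n) → ℝ) (hG : ContDiff ℝ (⊤ : ℕ∞) G)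
    (hCD : ∀ (x : EuclideanSpace ℝ (Fin n)) (v : EuclideanSpace ℝ (Fin n)),
      K * ∑ i, v i ^ 2 ≤ ∑ i, ∑ j, pd i (pd j G) x * v i * v j)
    (f : EuclideanSpace ℝ (Fin n) → ℝ) (hf : ContDiff ℝ (⊤ : ℕ∞) f)
    (x : EuclideanSpace ℝ (Fin n)) :
    ∑ j, (pd j (fun y => ∑ i, pd i f y ^ 2) x) ^ 2
      ≤ 4 * (∑ i, pd i f x ^ 2) *
          ((∑ i, ∑ j, pd i (pd j f) x ^ 2)
            + (∑ i, ∑ j, pd i (pd j G) x * pd i f x * pd j f x)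
            - K * ∑ i, pd i f x ^ 2) := by
  classical
  have hd : ∀ i : Fin n, ContDiff ℝ (⊤ : ℕ∞) (pd i f) := fun i =>
    (hf.fderiv_right (by simp)).clm_apply contDiff_const
  set c : Fin n → ℝ := fun i => pd i f x with hc
  have key : ∀ j : Fin n, pd j (fun y => ∑ i, pd i f y ^ 2) x
      = 2 * ∑ i, c i * pd j (pd i f) x := by
    intro j
    have h : HasFDerivAt (fun y => ∑ i, pd i f y ^ 2)
        (∑ i, ((2 : ℝ) * pd i f x) • fderiv ℝ (pd i f) x) x := by
      refine HasFDerivAt.fun_sum fun i _ => ?_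
      have h1 : HasFDerivAt (pd i f) (fderiv ℝ (pd i f) x) x :=
        ((hd i).differentiable (by simp) x).hasFDerivAt
      have h2 := h1.fun_mul h1
      have : ((2 : ℝ) * pd i f x) • fderiv ℝ (pd i f) x
          = pd i f x • fderiv ℝ (pd i f) x + pd i f x • fderiv ℝ (pd i f) x := by
        rw [two_mul, add_smul]
      rw [this]
      simpa [pow_two] using h2
    show fderiv ℝ (fun y => ∑ i, pd i f y ^ 2) x (EuclideanSpace.single j 1)
      = 2 * ∑ i, c i * pd j (pd i f) x
    rw [h.fderiv]
    simp only [ContinuousLinearMap.coe_sum', Finset.sum_apply,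
      ContinuousLinearMap.coe_smul', Pi.smul_apply, smul_eq_mul]
    rw [Finset.mul_sum]
    exact Finset.sum_congr rfl fun i _ => by simp [pd, hc]; ring
  have hΓnn : (0 : ℝ) ≤ ∑ i, c i ^ 2 := Finset.sum_nonneg fun i _ => sq_nonneg _
  have hCS : ∀ j : Fin n, (∑ i, c i * pd j (pd i f) x) ^ 2
      ≤ (∑ i, c i ^ 2) * ∑ i, pd j (pd i f) x ^ 2 := fun j =>
    Finset.sum_mul_sq_le_sq_mul_sq _ _ _
  have step1 : ∑ j, (pd j (fun y => ∑ i, pd i f y ^ 2) x) ^ 2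
      ≤ 4 * (∑ i, c i ^ 2) * ∑ j, ∑ i, pd j (pd i f) x ^ 2 := by
    calc ∑ j, (pd j (fun y => ∑ i, pd i f y ^ 2) x) ^ 2
        = ∑ j, 4 * (∑ i, c i * pd j (pd i f) x) ^ 2 := by
          refine Finset.sum_congr rfl fun j _ => ?_
          rw [key j]; ring
      _ ≤ ∑ j, 4 * ((∑ i, c i ^ 2) * ∑ i, pd j (pd i f) x ^ 2) := by
          refine Finset.sum_le_sum fun j _ => ?_
          have := hCS j; linarith
      _ = 4 * (∑ i, c i ^ 2) * ∑ j, ∑ i, pd j (pd i f) x ^ 2 := by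
          rw [Finset.mul_sum]
          exact Finset.sum_congr rfl fun j _ => by ring
  have hsym : (∑ j, ∑ i, pd j (pd i f) x ^ 2) = ∑ i, ∑ j, pd i (pd j f) x ^ 2 := rfl
  have hcd := hCD x (WithLp.toLp 2 c)
  have hpos : (∑ j, ∑ i, pd j (pd i f) x ^ 2)
      ≤ (∑ i, ∑ j, pd i (pd j f) x ^ 2)
        + (∑ i, ∑ j, pd i (pd j G) x * pd i f x * pd j f x)
        - K * ∑ i, pd i f x ^ 2 := by
    rw [hsym]
    have : K * ∑ i, c i ^ 2 ≤ ∑ i, ∑ j, pd i (pd j G) x * c i * c j := hcd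
    simp only [hc] at this ⊢
    linarith
  calc ∑ j, (pd j (fun y => ∑ i, pd i f y ^ 2) x) ^ 2
      ≤ 4 * (∑ i, c i ^ 2) * ∑ j, ∑ i, pd j (pd i f) x ^ 2 := step1
    _ ≤ 4 * (∑ i, pd i f x ^ 2) *
          ((∑ i, ∑ j, pd i (pd j f) x ^ 2)
            + (∑ i, ∑ j, pd i (pd j G) x * pd i f x * pd j f x)
            - K * ∑ i, pd i f x ^ 2) := by
        refine mul_le_mul_of_nonneg_left hpos ?_
        positivity
end
end

section
/- Let Z₁,…,Z_m be smooth vector fields on ℝⁿ. Then for every smooth u : ℝⁿ → ℝ and every x ∈ ℝⁿ, ½ Δ_Z(|Zu|²) = ‖Z²u‖² + Σ_{j=1}^m (Zⱼu)·Zⱼ(Δ_Z u) + 2 Σ_{i,j=1}^m (Zⱼu)·[Zᵢ,Zⱼ](Zᵢu) + Σ_{i,j=1}^m (Zⱼu)·[Zᵢ,[Zᵢ,Zⱼ]]u. -/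
noncomputable section
open scoped BigOperators

/-- The action of the vector field `Z j` on a function:
`Zⱼ f = Σᵢ Zⱼⁱ ∂ᵢ f`, i.e. the derivative of `f` in the direction `Z j x`. -/
def Zact {n m : ℕ} (Z : Fin m → EuclideanSpace ℝ (Fin n) → EuclideanSpace ℝ (Fin n))
    (j : Fin m) (f : EuclideanSpace ℝ (Fin n) → ℝ) (x : EuclideanSpace ℝ (Fin n)) : ℝ :=
  fderiv ℝ f x (Z j x)

/-- The operator `Δ_Z f = Σⱼ Zⱼ(Zⱼ f)`. -/
def ZLap {n m : ℕ} (Z : Fin m → EuclideanSpace ℝ (Fin n) → EuclideanSpace ℝ (Fin n))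
    (f : EuclideanSpace ℝ (Fin n) → ℝ) (x : EuclideanSpace ℝ (Fin n)) : ℝ :=
  ∑ j, Zact Z j (Zact Z j f) x

/-- The commutator `[Zᵢ,Zⱼ] f = Zᵢ(Zⱼ f) − Zⱼ(Zᵢ f)`. -/
def Zcomm {n m : ℕ} (Z : Fin m → EuclideanSpace ℝ (Fin n) → EuclideanSpace ℝ (Fin n))
    (i j : Fin m) (f : EuclideanSpace ℝ (Fin n) → ℝ)
    (x : EuclideanSpace ℝ (Fin n)) : ℝ :=
  Zact Z i (Zact Z j f) x - Zact Z j (Zact Z i f) x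

/-- The iterated commutator `[Zᵢ,[Zᵢ,Zⱼ]] f = Zᵢ([Zᵢ,Zⱼ]f) − [Zᵢ,Zⱼ](Zᵢ f)`. -/
def Zcomm2 {n m : ℕ} (Z : Fin m → EuclideanSpace ℝ (Fin n) → EuclideanSpace ℝ (Fin n))
    (i j : Fin m) (f : EuclideanSpace ℝ (Fin n) → ℝ)
    (x : EuclideanSpace ℝ (Fin n)) : ℝ :=
  Zact Z i (Zcomm Z i j f) x - Zcomm Z i j (Zact Z i f) x

section Helpers

variable {n m : ℕ} {Z : Fin m → EuclideanSpace ℝ (Fin n) → EuclideanSpace ℝ (Fin n)}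

lemma zact_contDiff (hZ : ∀ j, ContDiff ℝ (⊤ : ℕ∞) (Z j)) {f : EuclideanSpace ℝ (Fin n) → ℝ}
    (hf : ContDiff ℝ (⊤ : ℕ∞) f) (j : Fin m) : ContDiff ℝ (⊤ : ℕ∞) (Zact Z j f) :=
  (hf.fderiv_right (by simp)).clm_apply (hZ j)

lemma zact_sum {ι : Type*} (s : Finset ι) (f : ι → EuclideanSpace ℝ (Fin n) → ℝ)
    (hf : ∀ i ∈ s, ContDiff ℝ (⊤ : ℕ∞) (f i)) (k : Fin m) (x : EuclideanSpace ℝ (Fin n)) :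
    Zact Z k (fun y => ∑ i ∈ s, f i y) x = ∑ i ∈ s, Zact Z k (f i) x := by
  unfold Zact
  rw [fderiv_fun_sum fun i hi => ((hf i hi).differentiable (by simp)).differentiableAt]
  simp

lemma zact_mul {f g : EuclideanSpace ℝ (Fin n) → ℝ} (hf : ContDiff ℝ (⊤ : ℕ∞) f)
    (hg : ContDiff ℝ (⊤ : ℕ∞) g) (k : Fin m) (x : EuclideanSpace ℝ (Fin n)) :
    Zact Z k (fun y => f y * g y) x = Zact Z k f x * g x + f x * Zact Z k g x := by
  unfold Zact
  rw [fderiv_fun_mul ((hf.differentiable (by simp)).differentiableAt)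
    ((hg.differentiable (by simp)).differentiableAt)]
  simp
  ring

lemma zact_sub {f g : EuclideanSpace ℝ (Fin n) → ℝ} (hf : ContDiff ℝ (⊤ : ℕ∞) f)
    (hg : ContDiff ℝ (⊤ : ℕ∞) g) (k : Fin m) (x : EuclideanSpace ℝ (Fin n)) :
    Zact Z k (fun y => f y - g y) x = Zact Z k f x - Zact Z k g x := by
  unfold Zact
  rw [fderiv_fun_sub ((hf.differentiable (by simp)).differentiableAt)
    ((hg.differentiable (by simp)).differentiableAt)]
  simp

lemma zact_const_mul {f : EuclideanSpace ℝ (Fin n) → ℝ} (hf : ContDiff ℝ (⊤ : ℕ∞) f)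
    (c : ℝ) (k : Fin m) (x : EuclideanSpace ℝ (Fin n)) :
    Zact Z k (fun y => c * f y) x = c * Zact Z k f x := by
  unfold Zact
  rw [fderiv_const_mul ((hf.differentiable (by simp)).differentiableAt)]
  simp

lemma zact_sq {f : EuclideanSpace ℝ (Fin n) → ℝ} (hf : ContDiff ℝ (⊤ : ℕ∞) f)
    (k : Fin m) (x : EuclideanSpace ℝ (Fin n)) :
    Zact Z k (fun y => f y ^ 2) x = 2 * f x * Zact Z k f x := by
  have h : (fun y => f y ^ 2) = fun y => f y * f y := by funext y; ring
  rw [h, zact_mul hf hf]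
  ring

lemma bochner_key {m : ℕ} (a : Fin m → Fin m → ℝ) (w : Fin m → ℝ)
    (t : Fin m → Fin m → Fin m → ℝ) :
    (1 / 2 : ℝ) * (∑ i, ∑ j, 2 * (a i j ^ 2 + w j * t i i j))
      = (∑ i, ∑ j, a i j ^ 2) + (∑ j, w j * ∑ i, t j i i)
        + 2 * (∑ i, ∑ j, w j * (t i j i - t j i i))
        + ∑ i, ∑ j, w j * (t i i j - 2 * t i j i + t j i i) := by
  have h1 : (∑ j, w j * ∑ i, t j i i) = ∑ i, ∑ j, w j * t j i i := by
    simp only [Finset.mul_sum]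
    exact Finset.sum_comm
  rw [h1]
  simp only [Finset.mul_sum, ← Finset.sum_add_distrib]
  refine Finset.sum_congr rfl fun i _ => Finset.sum_congr rfl fun j _ => ?_
  ring

end Helpers

/-- Bochner-type formula for a family of smooth vector fields:
`½ Δ_Z(|Zu|²) = ‖Z²u‖² + Σⱼ (Zⱼu)·Zⱼ(Δ_Z u) + 2 Σ_{i,j} (Zⱼu)·[Zᵢ,Zⱼ](Zᵢu)
  + Σ_{i,j} (Zⱼu)·[Zᵢ,[Zᵢ,Zⱼ]]u`. -/
theorem stmt11 {n m : ℕ}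
    (Z : Fin m → EuclideanSpace ℝ (Fin n) → EuclideanSpace ℝ (Fin n))
    (hZ : ∀ j, ContDiff ℝ (⊤ : ℕ∞) (Z j))
    (u : EuclideanSpace ℝ (Fin n) → ℝ) (hu : ContDiff ℝ (⊤ : ℕ∞) u)
    (x : EuclideanSpace ℝ (Fin n)) :
    (1 / 2) * ZLap Z (fun y => ∑ j, Zact Z j u y ^ 2) x
      = (∑ i, ∑ j, Zact Z i (Zact Z j u) x ^ 2)
        + (∑ j, Zact Z j u x * Zact Z j (ZLap Z u) x)
        + 2 * (∑ i, ∑ j, Zact Z j u x * Zcomm Z i j (Zact Z i u) x)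
        + ∑ i, ∑ j, Zact Z j u x * Zcomm2 Z i j u x := by
  have hv : ∀ j, ContDiff ℝ (⊤ : ℕ∞) (Zact Z j u) := fun j => zact_contDiff hZ hu j
  have hA : ∀ i j, ContDiff ℝ (⊤ : ℕ∞) (Zact Z i (Zact Z j u)) :=
    fun i j => zact_contDiff hZ (hv j) i
  -- Step 1: first derivative of |Zu|²
  have step1 : ∀ i : Fin m, Zact Z i (fun y => ∑ j, Zact Z j u y ^ 2)
      = fun y => ∑ j, 2 * (Zact Z j u y * Zact Z i (Zact Z j u) y) := by
    intro i; funext y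
    rw [zact_sum Finset.univ _ (fun j _ => (hv j).pow 2) i y]
    refine Finset.sum_congr rfl fun j _ => ?_
    rw [zact_sq (hv j) i y]; ring
  -- LHS expansion
  have hL : ZLap Z (fun y => ∑ j, Zact Z j u y ^ 2) x
      = ∑ i, ∑ j, 2 * (Zact Z i (Zact Z j u) x ^ 2
          + Zact Z j u x * Zact Z i (Zact Z i (Zact Z j u)) x) := by
    unfold ZLap
    refine Finset.sum_congr rfl fun i _ => ?_
    rw [step1 i,
      zact_sum Finset.univ _ (fun j _ => contDiff_const.mul ((hv j).mul (hA i j))) i x]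
    refine Finset.sum_congr rfl fun j _ => ?_
    rw [zact_const_mul ((hv j).mul (hA i j)) 2 i x, zact_mul (hv j) (hA i j) i x]
    ring
  -- Z_j of the Laplacian
  have hJ : ∀ j : Fin m, Zact Z j (ZLap Z u) x
      = ∑ i, Zact Z j (Zact Z i (Zact Z i u)) x := by
    intro j
    have e : ZLap Z u = fun y => ∑ i, Zact Z i (Zact Z i u) y := rfl
    rw [e, zact_sum Finset.univ _ (fun i _ => hA i i) j x]
  -- Iterated commutator expansion
  have hC2 : ∀ i j : Fin m, Zcomm2 Z i j u x
      = Zact Z i (Zact Z i (Zact Z j u)) x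
          - 2 * Zact Z i (Zact Z j (Zact Z i u)) x
          + Zact Z j (Zact Z i (Zact Z i u)) x := by
    intro i j
    have e : Zcomm Z i j u
        = fun y => Zact Z i (Zact Z j u) y - Zact Z j (Zact Z i u) y := rfl
    unfold Zcomm2
    rw [e, zact_sub (hA i j) (hA j i) i x]
    unfold Zcomm
    ring
  have h2 : (∑ j, Zact Z j u x * Zact Z j (ZLap Z u) x)
      = ∑ j, Zact Z j u x * ∑ i, Zact Z j (Zact Z i (Zact Z i u)) x :=
    Finset.sum_congr rfl fun j _ => by rw [hJ j]
  have h4 : (∑ i, ∑ j, Zact Z j u x * Zcomm2 Z i j u x)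
      = ∑ i, ∑ j, Zact Z j u x * (Zact Z i (Zact Z i (Zact Z j u)) x
          - 2 * Zact Z i (Zact Z j (Zact Z i u)) x
          + Zact Z j (Zact Z i (Zact Z i u)) x) := by
    refine Finset.sum_congr rfl fun i _ => Finset.sum_congr rfl fun j _ => ?_
    rw [hC2 i j]
  rw [hL, h2, h4]
  simp only [Zcomm]
  exact bochner_key (fun i j => Zact Z i (Zact Z j u) x) (fun j => Zact Z j u x)
    (fun i j k => Zact Z i (Zact Z j (Zact Z k u)) x)
end
end
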